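/- arXiv:1103.4756 — 4 statements merged into one kernel-verified Lean document; each statement's English description precedes it below -/
import Mathlib

section
/- Suppose two continuous functions f, g : ℝ → ℝᵖ satisfy f(t) = C e^{tA} x and g(t) = C e^{tA} z for observable (C, A), i.e. the observability matrix [C; CA; …; CA^{n-1}] has rank n. If f(t) = g(t) for all t in some nonempty open interval, then x = z. -/
/-!
Put `w = x - z`. The map `t ↦ M e^{tA} w` has derivative `t ↦ M A e^{tA} w`, so if it vanishes
on an open interval, so does `t ↦ M A e^{tA} w`. Starting from `M = C` this gives
`C A^k e^{tA} w = 0` for every `k` on the interval; observability at one point `t₀` gives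
`e^{t₀A} w = 0`, and `e^{t₀A}` is invertible.
-/

open Matrix

theorem HasDerivAt.eq_zero_of_eqOn_zero {F : Type*} [NormedAddCommGroup F] [NormedSpace ℝ F]
    {f : ℝ → F} {f' : F} {s : Set ℝ} {t : ℝ} (hs : IsOpen s) (hf : Set.EqOn f 0 s) (ht : t ∈ s)
    (h : HasDerivAt f f' t) : f' = 0 :=
  h.unique <| (hasDerivAt_const t 0).congr_of_eventuallyEq <|
    Filter.eventually_of_mem (hs.mem_nhds ht) hf

namespace Matrix

variable {m n : Type*} [Fintype m] [Fintype n] [DecidableEq n]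

theorem hasDerivAt_mulVec_exp_smul_mulVec (M : Matrix m n ℝ) (A : Matrix n n ℝ) (w : n → ℝ)
    (t : ℝ) :
    HasDerivAt (fun u : ℝ => M *ᵥ (NormedSpace.exp (u • A) *ᵥ w))
      ((M * A) *ᵥ (NormedSpace.exp (t • A) *ᵥ w)) t := by
  let _ : NormedRing (Matrix n n ℝ) := Matrix.linftyOpNormedRing
  let _ : NormedAlgebra ℝ (Matrix n n ℝ) := Matrix.linftyOpNormedAlgebra
  let L : Matrix n n ℝ →ₗ[ℝ] (m → ℝ) := M.mulVecLin ∘ₗ (mulVecBilin ℝ ℝ).flip w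
  have hL : HasFDerivAt L.toContinuousLinearMap L.toContinuousLinearMap
      (NormedSpace.exp (t • A)) :=
    ContinuousLinearMap.hasFDerivAt _
  refine (hL.comp_hasDerivAt t (hasDerivAt_exp_smul_const' A t)).congr_deriv ?_
  change M *ᵥ ((A * NormedSpace.exp (t • A)) *ᵥ w) = _
  rw [← mulVec_mulVec, mulVec_mulVec]

theorem eqOn_zero_mul_of_eqOn_zero {s : Set ℝ} (hs : IsOpen s) {M : Matrix m n ℝ}
    {A : Matrix n n ℝ} {w : n → ℝ}
    (h : Set.EqOn (fun t : ℝ => M *ᵥ (NormedSpace.exp (t • A) *ᵥ w)) 0 s) :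
    Set.EqOn (fun t : ℝ => (M * A) *ᵥ (NormedSpace.exp (t • A) *ᵥ w)) 0 s := fun _ ht =>
  (hasDerivAt_mulVec_exp_smul_mulVec M A w _).eq_zero_of_eqOn_zero hs h ht

theorem eqOn_zero_mul_pow_of_eqOn_zero {s : Set ℝ} (hs : IsOpen s) {M : Matrix m n ℝ}
    {A : Matrix n n ℝ} {w : n → ℝ}
    (h : Set.EqOn (fun t : ℝ => M *ᵥ (NormedSpace.exp (t • A) *ᵥ w)) 0 s) (k : ℕ) :
    Set.EqOn (fun t : ℝ => (M * A ^ k) *ᵥ (NormedSpace.exp (t • A) *ᵥ w)) 0 s := by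
  induction k with
  | zero => simpa using h
  | succ k ih => simpa only [pow_succ, ← Matrix.mul_assoc] using eqOn_zero_mul_of_eqOn_zero hs ih

end Matrix

theorem stmt_10 {n p : ℕ} (A : Matrix (Fin n) (Fin n) ℝ) (C : Matrix (Fin p) (Fin n) ℝ)
    (hobs : ∀ v : Fin n → ℝ, (∀ k < n, C.mulVec ((A ^ k).mulVec v) = 0) → v = 0)
    (x z : Fin n → ℝ) (a b : ℝ) (hab : a < b)
    (heq : ∀ t ∈ Set.Ioo a b,
      C.mulVec ((NormedSpace.exp (t • A)).mulVec x)
        = C.mulVec ((NormedSpace.exp (t • A)).mulVec z)) :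
    x = z := by
  have hzero : Set.EqOn (fun t : ℝ => C *ᵥ (NormedSpace.exp (t • A) *ᵥ (x - z))) 0
      (Set.Ioo a b) := fun t ht => by
    simp only [mulVec_sub, heq t ht, sub_self, Pi.zero_apply]
  obtain ⟨t₀, ht₀⟩ := Set.nonempty_Ioo.2 hab
  have hexp : NormedSpace.exp (t₀ • A) *ᵥ (x - z) = 0 := hobs _ fun k _ => by
    simpa only [mulVec_mulVec, Matrix.mul_assoc, Pi.zero_apply] using
      eqOn_zero_mul_pow_of_eqOn_zero isOpen_Ioo hzero k ht₀
  have hinj := mulVec_injective_iff_isUnit.2 (isUnit_exp (t₀ • A))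
  exact sub_eq_zero.1 (hinj (by rw [hexp, mulVec_zero]))
end

section
/- Let f : [0,∞) → ℝᵖ with f(t) = C e^{tA} x₀, and suppose (C,A) is observable and x₀ together with the vectors A^k x₀ span ℝⁿ (span-reachability from the single initial state x₀). If also f(t) = C' e^{tA'} x₀' with (C', A') observable and span-reachable from x₀', with state dimension n', then n = n' and there exists an invertible matrix T ∈ ℝ^{n×n} with A' = T A T⁻¹, C' = C T⁻¹, x₀' = T x₀. -/
open Matrix Set Filter Topology

/-!
The Markov parameters `C A^k x₀` are the successive derivatives at `t = 0` of the output
`t ↦ C e^{tA} x₀`, so the two realizations share them. The observation map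
`O v = (C A^k v)_k` is injective by observability, satisfies `O (A v) = shift (O v)`, and by
span-reachability its range is spanned by the shifts of the Markov sequence. Hence `O` and `O'` are
injective with the same range, and `T = O'⁻¹ ∘ O` is the required similarity.
-/

section Observation

variable {R ι ι' κ : Type*} [CommRing R] [Fintype ι] [DecidableEq ι] [Fintype ι'] [DecidableEq ι']

def obsMap (A : Matrix ι ι R) (C : Matrix κ ι R) : (ι → R) →ₗ[R] (ℕ → κ → R) where
  toFun v k := C *ᵥ (A ^ k *ᵥ v)
  map_add' u v := by funext k; simp only [mulVec_add, Pi.add_apply]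
  map_smul' c v := by funext k; simp only [mulVec_smul, Pi.smul_apply, RingHom.id_apply]

variable {A : Matrix ι ι R} {C : Matrix κ ι R} {A' : Matrix ι' ι' R} {C' : Matrix κ ι' R}

@[simp]
lemma obsMap_apply (v : ι → R) (k : ℕ) : obsMap A C v k = C *ᵥ (A ^ k *ᵥ v) := rfl

lemma obsMap_pow_mulVec (j : ℕ) (v : ι → R) (k : ℕ) :
    obsMap A C (A ^ j *ᵥ v) k = obsMap A C v (k + j) := by
  simp only [obsMap_apply, mulVec_mulVec, pow_add]

lemma obsMap_mulVec (v : ι → R) (k : ℕ) : obsMap A C (A *ᵥ v) k = obsMap A C v (k + 1) := by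
  simpa using obsMap_pow_mulVec (A := A) (C := C) 1 v k

lemma injective_obsMap {N : ℕ} (hobs : ∀ v, (∀ k < N, C *ᵥ (A ^ k *ᵥ v) = 0) → v = 0) :
    Function.Injective (obsMap A C) := by
  rw [← LinearMap.ker_eq_bot, LinearMap.ker_eq_bot']
  exact fun v hv => hobs v fun k _ => congrFun hv k

lemma range_obsMap_of_span_eq_top {x₀ : ι → R}
    (hreach : Submodule.span R {y | ∃ k : ℕ, y = A ^ k *ᵥ x₀} = ⊤) :
    LinearMap.range (obsMap A C) =
      Submodule.span R {g | ∃ j : ℕ, g = fun k => obsMap A C x₀ (k + j)} := by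
  rw [LinearMap.range_eq_map, ← hreach, Submodule.map_span]
  congr 1
  ext g
  simp only [mem_image, mem_ofPred_eq]
  constructor
  · rintro ⟨_, ⟨j, rfl⟩, rfl⟩
    exact ⟨j, funext (obsMap_pow_mulVec j x₀)⟩
  · rintro ⟨j, rfl⟩
    exact ⟨_, ⟨j, rfl⟩, funext (obsMap_pow_mulVec j x₀)⟩

lemma exists_linearEquiv_comp_eq {M N P : Type*} [AddCommGroup M] [AddCommGroup N]
    [AddCommGroup P] [Module R M] [Module R N] [Module R P] {f : M →ₗ[R] P} {g : N →ₗ[R] P}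
    (hf : Function.Injective f) (hg : Function.Injective g)
    (h : LinearMap.range f = LinearMap.range g) :
    ∃ e : M ≃ₗ[R] N, ∀ x, g (e x) = f x :=
  ⟨(LinearEquiv.ofInjective f hf).trans
      ((LinearEquiv.ofEq _ _ h).trans (LinearEquiv.ofInjective g hg).symm),
    fun _ => congrArg Subtype.val ((LinearEquiv.ofInjective g hg).apply_symm_apply _)⟩

theorem exists_linearEquiv_of_obsMap_eq {x₀ : ι → R} {x₀' : ι' → R}
    (hobs : Function.Injective (obsMap A C)) (hobs' : Function.Injective (obsMap A' C'))
    (hreach : Submodule.span R {y | ∃ k : ℕ, y = A ^ k *ᵥ x₀} = ⊤)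
    (hreach' : Submodule.span R {y | ∃ k : ℕ, y = A' ^ k *ᵥ x₀'} = ⊤)
    (hmarkov : obsMap A C x₀ = obsMap A' C' x₀') :
    ∃ e : (ι → R) ≃ₗ[R] (ι' → R),
      (∀ v, e (A *ᵥ v) = A' *ᵥ e v) ∧ (∀ v, C' *ᵥ e v = C *ᵥ v) ∧ e x₀ = x₀' := by
  obtain ⟨e, he⟩ := exists_linearEquiv_comp_eq hobs hobs' <| by
    rw [range_obsMap_of_span_eq_top hreach, range_obsMap_of_span_eq_top hreach', hmarkov]
  refine ⟨e, fun v => hobs' ?_, fun v => ?_, hobs' ?_⟩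
  · funext k
    rw [he, obsMap_mulVec, obsMap_mulVec, he]
  · simpa using congrFun (he v) 0
  · rw [he, hmarkov]

theorem exists_matrix_similarity_of_linearEquiv {x₀ : ι → R} {x₀' : ι' → R}
    (e : (ι → R) ≃ₗ[R] (ι' → R)) (hA : ∀ v, e (A *ᵥ v) = A' *ᵥ e v)
    (hC : ∀ v, C' *ᵥ e v = C *ᵥ v) (hx₀ : e x₀ = x₀') :
    ∃ (T : Matrix ι' ι R) (S : Matrix ι ι' R),
      T * S = 1 ∧ S * T = 1 ∧ A' * T = T * A ∧ C' * T = C ∧ T *ᵥ x₀ = x₀' := by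
  set T := LinearMap.toMatrix' (e : (ι → R) →ₗ[R] (ι' → R))
  set S := LinearMap.toMatrix' (e.symm : (ι' → R) →ₗ[R] (ι → R))
  have hT (v : ι → R) : T *ᵥ v = e v := LinearMap.toMatrix'_mulVec _ v
  have hS (v : ι' → R) : S *ᵥ v = e.symm v := LinearMap.toMatrix'_mulVec _ v
  refine ⟨T, S, ?_, ?_, ?_, ?_, (hT x₀).trans hx₀⟩ <;> refine ext_iff_mulVec.2 fun v => ?_ <;>
    simp only [← mulVec_mulVec, hT, hS, one_mulVec, e.apply_symm_apply, e.symm_apply_apply, hA, hC]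

end Observation

theorem Set.EqOn.hasDerivAt_Ici {E : Type*} [NormedAddCommGroup E] [NormedSpace ℝ E]
    {f g f' g' : ℝ → E} {a : ℝ} (h : EqOn f g (Ici a)) (hf : ∀ t, HasDerivAt f (f' t) t)
    (hg : ∀ t, HasDerivAt g (g' t) t) (hf' : Continuous f') (hg' : Continuous g') :
    EqOn f' g' (Ici a) := by
  have hIoi : EqOn f' g' (Ioi a) := fun t ht =>
    (hf t).unique <| (hg t).congr_of_eventuallyEq <|
      eventually_of_mem (isOpen_Ioi.mem_nhds ht) fun s hs => h (mem_Ici_of_Ioi hs)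
  simpa using hIoi.closure hf' hg'

section Exponential

attribute [local instance] Matrix.linftyOpNormedRing Matrix.linftyOpNormedAlgebra

variable {ι κ : Type*} [Fintype ι] [DecidableEq ι] [Fintype κ]

lemma hasDerivAt_mulVec_exp_smul_mulVec (A : Matrix ι ι ℝ) (C : Matrix κ ι ℝ) (v : ι → ℝ)
    (t : ℝ) :
    HasDerivAt (fun s : ℝ => C *ᵥ (NormedSpace.exp (s • A) *ᵥ v))
      (C *ᵥ (NormedSpace.exp (t • A) *ᵥ (A *ᵥ v))) t := by
  let L : Matrix ι ι ℝ →ₗ[ℝ] (κ → ℝ) :=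
    C.mulVecLin ∘ₗ LinearMap.applyₗ v ∘ₗ (Matrix.toLin' : _ ≃ₗ[ℝ] _).toLinearMap
  exact (L.toContinuousLinearMap.hasFDerivAt.comp_hasDerivAt t
    (hasDerivAt_exp_smul_const A t)).congr_deriv (by
      show C *ᵥ ((NormedSpace.exp (t • A) * A) *ᵥ v) = _; rw [← mulVec_mulVec])

lemma continuous_mulVec_exp_smul_mulVec (A : Matrix ι ι ℝ) (C : Matrix κ ι ℝ) (v : ι → ℝ) :
    Continuous fun t : ℝ => C *ᵥ (NormedSpace.exp (t • A) *ᵥ v) :=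
  continuous_iff_continuousAt.2 fun t => (hasDerivAt_mulVec_exp_smul_mulVec A C v t).continuousAt

theorem obsMap_eq_of_mulVec_exp_eq {ι' : Type*} [Fintype ι'] [DecidableEq ι']
    {A : Matrix ι ι ℝ} {C : Matrix κ ι ℝ} {x₀ : ι → ℝ}
    {A' : Matrix ι' ι' ℝ} {C' : Matrix κ ι' ℝ} {x₀' : ι' → ℝ}
    (heq : ∀ t : ℝ, 0 ≤ t →
      C *ᵥ (NormedSpace.exp (t • A) *ᵥ x₀) = C' *ᵥ (NormedSpace.exp (t • A') *ᵥ x₀')) :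
    obsMap A C x₀ = obsMap A' C' x₀' := by
  suffices h : ∀ k : ℕ, EqOn (fun t : ℝ => C *ᵥ (NormedSpace.exp (t • A) *ᵥ (A ^ k *ᵥ x₀)))
      (fun t : ℝ => C' *ᵥ (NormedSpace.exp (t • A') *ᵥ (A' ^ k *ᵥ x₀'))) (Ici 0) by
    funext k
    simpa using h k (mem_Ici.2 le_rfl)
  intro k
  induction k with
  | zero => exact fun t ht => by simpa using heq t ht
  | succ k ih =>
    simp only [pow_succ', ← mulVec_mulVec]
    exact ih.hasDerivAt_Ici (hasDerivAt_mulVec_exp_smul_mulVec A C _)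
      (hasDerivAt_mulVec_exp_smul_mulVec A' C' _) (continuous_mulVec_exp_smul_mulVec A C _)
      (continuous_mulVec_exp_smul_mulVec A' C' _)

end Exponential

theorem stmt_13 {p n n' : ℕ}
    (A : Matrix (Fin n) (Fin n) ℝ) (C : Matrix (Fin p) (Fin n) ℝ) (x₀ : Fin n → ℝ)
    (A' : Matrix (Fin n') (Fin n') ℝ) (C' : Matrix (Fin p) (Fin n') ℝ) (x₀' : Fin n' → ℝ)
    (hobs : ∀ v : Fin n → ℝ, (∀ k < n, C.mulVec ((A ^ k).mulVec v) = 0) → v = 0)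
    (hreach : Submodule.span ℝ {y : Fin n → ℝ | ∃ k : ℕ, y = (A ^ k).mulVec x₀} = ⊤)
    (hobs' : ∀ v : Fin n' → ℝ, (∀ k < n', C'.mulVec ((A' ^ k).mulVec v) = 0) → v = 0)
    (hreach' : Submodule.span ℝ {y : Fin n' → ℝ | ∃ k : ℕ, y = (A' ^ k).mulVec x₀'} = ⊤)
    (heq : ∀ t : ℝ, 0 ≤ t →
      C.mulVec ((NormedSpace.exp (t • A)).mulVec x₀)
        = C'.mulVec ((NormedSpace.exp (t • A')).mulVec x₀')) :
    n = n' ∧ ∃ (T : Matrix (Fin n') (Fin n) ℝ) (S : Matrix (Fin n) (Fin n') ℝ),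
      T * S = 1 ∧ S * T = 1 ∧ A' * T = T * A ∧ C' * T = C ∧ T.mulVec x₀ = x₀' := by
  obtain ⟨e, hA, hC, hx₀⟩ := exists_linearEquiv_of_obsMap_eq (injective_obsMap hobs)
    (injective_obsMap hobs') hreach hreach' (obsMap_eq_of_mulVec_exp_eq heq)
  refine ⟨by simpa using e.finrank_eq, exists_matrix_similarity_of_linearEquiv e hA hC hx₀⟩
end

section
/- Let H be an infinite matrix with rows indexed by ℕ and columns indexed by a set J, with entries in ℝ, whose column space has finite dimension n. Let σ : J' → J be the shift on column indices of the form (j,l) ↦ (j+1,l) for J = ℕ × I. Assume the entry of H at row i and column (j,l) equals h_l(i+j) for sequences h_l : ℕ → ℝ. Then there exists a linear map A on the column space of H mapping, for every (j,l), the column indexed by (j,l) to the column indexed by (j+1,l). -/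
theorem stmt_16 {I : Type*} (h : I → ℕ → ℝ) (n : ℕ)
    (hrank : Module.rank ℝ
      ↥(Submodule.span ℝ (Set.range (fun jl : ℕ × I => fun i : ℕ => h jl.2 (i + jl.1)))) = n) :
    letI col : ℕ × I → (ℕ → ℝ) := fun jl i => h jl.2 (i + jl.1)
    letI V : Submodule ℝ (ℕ → ℝ) := Submodule.span ℝ (Set.range col)
    ∃ A : V →ₗ[ℝ] V, ∀ (j : ℕ) (l : I),
      A ⟨col (j, l), Submodule.subset_span (Set.mem_range_self _)⟩
        = ⟨col (j + 1, l), Submodule.subset_span (Set.mem_range_self _)⟩ := by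
  set col : ℕ × I → (ℕ → ℝ) := fun jl i => h jl.2 (i + jl.1) with hcol
  set V : Submodule ℝ (ℕ → ℝ) := Submodule.span ℝ (Set.range col) with hV
  set S : (ℕ → ℝ) →ₗ[ℝ] (ℕ → ℝ) :=
    { toFun := fun f i => f (i + 1)
      map_add' := fun f g => rfl
      map_smul' := fun c f => rfl } with hS
  have hshift : ∀ j l, S (col (j, l)) = col (j + 1, l) := by
    intro j l
    funext i
    show h l (i + 1 + j) = h l (i + (j + 1))
    ring_nf
  have hmap : ∀ x ∈ V, S x ∈ V := by
    intro x hx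
    refine Submodule.span_induction ?_ ?_ ?_ ?_ hx
    · rintro _ ⟨⟨j, l⟩, rfl⟩
      rw [hshift]
      exact Submodule.subset_span (Set.mem_range_self _)
    · simp
    · intro a b _ _ ha hb
      rw [map_add]; exact add_mem ha hb
    · intro c a _ ha
      rw [map_smul]; exact Submodule.smul_mem _ _ ha
  refine ⟨S.restrict hmap, fun j l => ?_⟩
  exact Subtype.ext (hshift j l)
end

section
/- Let h : ℕ → ℝᵖ be a sequence and define the Hankel matrix H with H_{(i,r),j} = (h(i+j))_r. If rank H = n < ∞, then there exist C ∈ ℝ^{p×n}, A ∈ ℝ^{n×n}, x ∈ ℝⁿ such that h(k) = C A^k x for all k ∈ ℕ. -/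
/-!
The column space `V` of the Hankel matrix is invariant under the shift `(i, r) ↦ (i + 1, r)`,
which maps column `j` to column `j + 1`; so `V` is the span of the orbit of column `0` under the
shift. Since `h k` is row block `0` of column `k`, in a basis of the `n`-dimensional space `V`
the matrices of the restricted shift and of the evaluation at row block `0`, together with the
coordinates of column `0`, give the realization.
-/

open Matrix Submodule

theorem LinearMap.apply_pow_apply_eq_toMatrix_mulVec {R M ι κ : Type*} [CommRing R]
    [AddCommGroup M] [Module R M] [Fintype ι] [DecidableEq ι] [Fintype κ] [DecidableEq κ]
    (b : Module.Basis ι R M) (L : M →ₗ[R] κ → R) (T : Module.End R M) (v : M) (k : ℕ) :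
    L ((T ^ k) v) =
      toMatrix b (Pi.basisFun R κ) L *ᵥ (toMatrix b b T ^ k *ᵥ b.repr v) := by
  rw [LinearMap.toMatrix_pow, toMatrix_mulVec_repr, toMatrix_mulVec_repr]
  ext i
  simp

theorem Module.End.apply_mem_span_range_pow_apply {R M : Type*} [Semiring R] [AddCommMonoid M]
    [Module R M] (T : Module.End R M) (v : M) :
    ∀ w ∈ span R (Set.range fun j : ℕ => (T ^ j) v),
      T w ∈ span R (Set.range fun j : ℕ => (T ^ j) v) := by
  refine fun w hw => (span_le (p := (span R _).comap T)).2 ?_ hw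
  rintro _ ⟨j, rfl⟩
  exact subset_span ⟨j + 1, by simp only [pow_succ', Module.End.mul_apply]⟩

theorem Module.End.exists_matrix_realization {K M κ : Type*} [Field K] [AddCommGroup M]
    [Module K M] [Fintype κ] [DecidableEq κ] (T : Module.End K M) (v : M) (L : M →ₗ[K] κ → K)
    {n : ℕ} (hn : Module.rank K (span K (Set.range fun j : ℕ => (T ^ j) v)) = n) :
    ∃ (C : Matrix κ (Fin n) K) (A : Matrix (Fin n) (Fin n) K) (x : Fin n → K),
      ∀ k : ℕ, L ((T ^ k) v) = C *ᵥ (A ^ k *ᵥ x) := by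
  set V := span K (Set.range fun j : ℕ => (T ^ j) v)
  have : Module.Finite K V := Module.finite_of_rank_eq_nat hn
  let b := Module.finBasisOfFinrankEq K V (Module.finrank_eq_of_rank_eq hn)
  have hT := T.apply_mem_span_range_pow_apply v
  let v' : V := ⟨v, subset_span ⟨0, by simp⟩⟩
  refine ⟨LinearMap.toMatrix b (Pi.basisFun K κ) (L ∘ₗ V.subtype),
    LinearMap.toMatrix b b (T.restrict hT), b.repr v', fun k => ?_⟩
  rw [← LinearMap.apply_pow_apply_eq_toMatrix_mulVec, Module.End.pow_restrict]
  rfl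

theorem stmt_17 {p : ℕ} (h : ℕ → Fin p → ℝ) (n : ℕ)
    (hrank : Module.rank ℝ
      ↥(Submodule.span ℝ (Set.range
          (fun j : ℕ => fun ir : ℕ × Fin p => h (ir.1 + j) ir.2))) = n) :
    ∃ (C : Matrix (Fin p) (Fin n) ℝ) (A : Matrix (Fin n) (Fin n) ℝ) (x : Fin n → ℝ),
      ∀ k : ℕ, h k = C.mulVec ((A ^ k).mulVec x) := by
  set column : ℕ → ℕ × Fin p → ℝ := fun j ir => h (ir.1 + j) ir.2
  let shift := LinearMap.funLeft ℝ ℝ fun ir : ℕ × Fin p => (ir.1 + 1, ir.2)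
  have shift_pow_column : ∀ j, (shift ^ j) (column 0) = column j := by
    intro j
    induction j with
    | zero => rfl
    | succ j ih =>
      rw [pow_succ', Module.End.mul_apply, ih]
      funext ir
      simp only [shift, column, LinearMap.funLeft_apply, add_right_comm _ 1 j, add_assoc]
  rw [show column = fun j => (shift ^ j) (column 0) from funext fun j => (shift_pow_column j).symm]
    at hrank
  obtain ⟨C, A, x, hCAx⟩ := Module.End.exists_matrix_realization shift (column 0)
    (LinearMap.funLeft ℝ ℝ fun r : Fin p => (0, r)) hrank
  refine ⟨C, A, x, fun k => ?_⟩
  rw [← hCAx, shift_pow_column]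
  funext r
  simp [column]
end
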